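/- arXiv:0708.3152 — 3 statements merged into one kernel-verified Lean document; each statement's English description precedes it below -/
import Mathlib

section
/- Let N be a natural number, and for 0 ≤ i ≤ N let Q_i be defined by Q_i = (1/2)·∑_{l=0}^{i} (a_{l,i-l}·f_l·f_{i-l} − b_{l,i-l}·f_i) − ∑_{l=i}^{N} (a_{i,l-i}·f_i·f_{l-i} − b_{i,l-i}·f_l), where a and b are symmetric in their two indices. Then for any sequence (φ_i)_{0≤i≤N}, ∑_{i=0}^{N} Q_i·φ_i = −(1/2)·∑_{i=0}^{N} ∑_{l=0}^{i} (a_{l,i-l}·f_l·f_{i-l} − b_{l,i-l}·f_i)·(φ_l + φ_{i-l} − φ_i). -/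
/-!
Writing `G i l` for the `l`-th summand of the gain term of `Q_i`, the loss term of `Q_i` is
`∑_{l ∈ [i, N]} G l i`, so exchanging the order of summation turns `∑ Q_i φ_i` into
`½ ∑_{i,l} G i l φ_i - ∑_{i,l} G i l φ_l` over the triangle `l ≤ i ≤ N`.
The symmetry of `a` and `b` makes `G i` invariant under `l ↦ i - l`, so
`∑_{i,l} G i l φ_{i-l} = ∑_{i,l} G i l φ_l`, and the two sides agree.
-/

open Finset

theorem Finset.sum_range_sum_Icc_comm {M : Type*} [AddCommMonoid M] (N : ℕ) (F : ℕ → ℕ → M) :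
    ∑ i ∈ range (N + 1), ∑ l ∈ Icc i N, F i l
      = ∑ i ∈ range (N + 1), ∑ l ∈ range (i + 1), F l i := by
  simpa only [range_eq_Ico, ← Ico_add_one_right_eq_Icc] using sum_Ico_Ico_comm 0 (N + 1) F

section ReflectionInvariant

variable {R : Type*} (G : ℕ → ℕ → R)

theorem sum_range_mul_apply_sub_of_reflect [NonUnitalNonAssocSemiring R]
    (hG : ∀ i l, l ≤ i → G i (i - l) = G i l) (φ : ℕ → R) (i : ℕ) :
    ∑ l ∈ range (i + 1), G i l * φ (i - l) = ∑ l ∈ range (i + 1), G i l * φ l := by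
  rw [← sum_range_reflect]
  refine sum_congr rfl fun l hl => ?_
  have hli : l ≤ i := Nat.lt_succ_iff.mp (mem_range.mp hl)
  rw [Nat.add_sub_cancel, Nat.sub_sub_self hli, hG i l hli]

theorem sum_gain_sub_loss_mul_eq_of_reflect [Field R] [NeZero (2 : R)]
    (hG : ∀ i l, l ≤ i → G i (i - l) = G i l) (N : ℕ) (φ : ℕ → R) :
    ∑ i ∈ range (N + 1),
      ((1 / 2) * ∑ l ∈ range (i + 1), G i l - ∑ l ∈ Icc i N, G l i) * φ i
    = -(1 / 2) * ∑ i ∈ range (N + 1), ∑ l ∈ range (i + 1),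
        G i l * (φ l + φ (i - l) - φ i) := by
  have hloss : ∑ i ∈ range (N + 1), ∑ l ∈ Icc i N, G l i * φ i
      = ∑ i ∈ range (N + 1), ∑ l ∈ range (i + 1), G i l * φ l :=
    Finset.sum_range_sum_Icc_comm N fun i l => G l i * φ i
  have hlhs : ∑ i ∈ range (N + 1),
      ((1 / 2) * ∑ l ∈ range (i + 1), G i l - ∑ l ∈ Icc i N, G l i) * φ i
      = 1 / 2 * ∑ i ∈ range (N + 1), ∑ l ∈ range (i + 1), G i l * φ i
        - ∑ i ∈ range (N + 1), ∑ l ∈ range (i + 1), G i l * φ l := by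
    rw [← hloss, mul_sum, ← sum_sub_distrib]
    refine sum_congr rfl fun i _ => ?_
    rw [sub_mul, mul_assoc, sum_mul, sum_mul]
  have htwo : (1 / 2 : R) * 2 = 1 := one_div_mul_cancel two_ne_zero
  simp only [hlhs, mul_sub, mul_add, sum_sub_distrib, sum_add_distrib,
    sum_range_mul_apply_sub_of_reflect G hG]
  linear_combination (∑ i ∈ range (N + 1), ∑ l ∈ range (i + 1), G i l * φ l) * htwo

end ReflectionInvariant

theorem discrete_weak_formulation (N : ℕ) (a b : ℕ → ℕ → ℝ) (f φ : ℕ → ℝ)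
    (ha : ∀ i j, a i j = a j i) (hb : ∀ i j, b i j = b j i) :
    ∑ i ∈ range (N + 1),
      ((1 / 2) * ∑ l ∈ range (i + 1),
          (a l (i - l) * f l * f (i - l) - b l (i - l) * f i)
        - ∑ l ∈ Icc i N, (a i (l - i) * f i * f (l - i) - b i (l - i) * f l)) * φ i
    = -(1 / 2) * ∑ i ∈ range (N + 1), ∑ l ∈ range (i + 1),
        (a l (i - l) * f l * f (i - l) - b l (i - l) * f i)
          * (φ l + φ (i - l) - φ i) := by
  refine sum_gain_sub_loss_mul_eq_of_reflect
    (fun i l => a l (i - l) * f l * f (i - l) - b l (i - l) * f i) (fun i l hli => ?_) N φ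
  simp only [Nat.sub_sub_self hli, ha (i - l) l, hb (i - l) l]
  ring
end

section
/- Define for 0 ≤ i ≤ N−1 the fluxes C_{i+1/2} = ∑_{j=0}^{i} ∑_{l=i+1}^{N-1} j·a_{j,l-j}·f_j·f_{l-j} and F_{i+1/2} = ∑_{j=0}^{i} ∑_{l=i+1}^{N-1} j·b_{j,l-j}·f_l, with C_{-1/2} = F_{-1/2} = 0. Then for every i ≥ 1, −(C_{i+1/2} − C_{i-1/2}) + (F_{i+1/2} − F_{i-1/2}) = i·Q_i, where Q_i = (1/2)·∑_{l=0}^{i} (a_{l,i-l}·f_l·f_{i-l} − b_{l,i-l}·f_i) − ∑_{l=i}^{N-1} (a_{i,l-i}·f_i·f_{l-i} − b_{i,l-i}·f_l). -/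
/-!
Splitting off the row `j = i` and the column `l = i` of the double sums shows that the flux
difference is the loss term `∑_{l > i} i·a_{i,l-i} f_i f_{l-i}` minus the gain term
`∑_{j < i} j·a_{j,i-j} f_j f_{i-j}` (and likewise for `b`).  The weight `j` in the gain term is
turned into `i/2` by pairing `j` with `i - j`, which is where the symmetry of `a` and `b` enters.
-/

open Finset

lemma Nat.sum_Icc_eq_add_sum_Icc_succ {M : Type*} [AddCommMonoid M] (f : ℕ → M) {a b : ℕ}
    (hab : a ≤ b) : ∑ x ∈ Icc a b, f x = f a + ∑ x ∈ Icc (a + 1) b, f x := by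
  rw [Icc_add_one_left_eq_Ioc, add_sum_Ioc_eq_sum_Icc hab]

lemma sum_range_succ_sum_Icc_succ_sub_sum_range_sum_Icc {M : Type*} [AddCommGroup M]
    (g : ℕ → ℕ → M) {i m : ℕ} (him : i ≤ m) :
    ∑ j ∈ range (i + 1), ∑ l ∈ Icc (i + 1) m, g j l - ∑ j ∈ range i, ∑ l ∈ Icc i m, g j l
      = ∑ l ∈ Icc (i + 1) m, g i l - ∑ j ∈ range i, g j i := by
  simp only [sum_range_succ, Nat.sum_Icc_eq_add_sum_Icc_succ _ him, sum_add_distrib]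
  abel

lemma two_mul_sum_range_natCast_mul_of_symm {R : Type*} [Semiring R] (c : ℕ → ℕ → R)
    (hc : ∀ p q, c p q = c q p) (n : ℕ) :
    2 * ∑ j ∈ range (n + 1), (j : R) * c j (n - j) = n * ∑ j ∈ range (n + 1), c j (n - j) := by
  have hreflect : ∑ j ∈ range (n + 1), (j : R) * c j (n - j)
      = ∑ j ∈ range (n + 1), ((n - j : ℕ) : R) * c j (n - j) := by
    rw [← sum_range_reflect]
    refine sum_congr rfl fun j hj => ?_
    rw [Nat.add_sub_cancel, Nat.sub_sub_self (Nat.lt_succ_iff.mp (mem_range.mp hj)), hc]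
  calc 2 * ∑ j ∈ range (n + 1), (j : R) * c j (n - j)
      = ∑ j ∈ range (n + 1), ((j + (n - j) : ℕ) : R) * c j (n - j) := by
        rw [two_mul]
        nth_rw 2 [hreflect]
        rw [← sum_add_distrib]
        simp only [Nat.cast_add, add_mul]
    _ = n * ∑ j ∈ range (n + 1), c j (n - j) := by
        rw [mul_sum]
        refine sum_congr rfl fun j hj => ?_
        rw [Nat.add_sub_cancel' (Nat.lt_succ_iff.mp (mem_range.mp hj))]

theorem flux_difference_eq_general (N : ℕ) (a b : ℕ → ℕ → ℝ) (f : ℕ → ℝ)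
    (ha : ∀ i j, a i j = a j i) (hb : ∀ i j, b i j = b j i)
    (i : ℕ) (hiN : i ≤ N - 1) :
    -((∑ j ∈ range (i + 1), ∑ l ∈ Icc (i + 1) (N - 1),
          (j : ℝ) * a j (l - j) * f j * f (l - j))
      - ∑ j ∈ range i, ∑ l ∈ Icc i (N - 1),
          (j : ℝ) * a j (l - j) * f j * f (l - j))
    + ((∑ j ∈ range (i + 1), ∑ l ∈ Icc (i + 1) (N - 1),
          (j : ℝ) * b j (l - j) * f l)
      - ∑ j ∈ range i, ∑ l ∈ Icc i (N - 1),
          (j : ℝ) * b j (l - j) * f l)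
    = (i : ℝ) *
      ((1 / 2) * ∑ l ∈ range (i + 1),
          (a l (i - l) * f l * f (i - l) - b l (i - l) * f i)
        - ∑ l ∈ Icc i (N - 1),
          (a i (l - i) * f i * f (l - i) - b i (l - i) * f l)) := by
  have hC := sum_range_succ_sum_Icc_succ_sub_sum_range_sum_Icc
    (fun j l => (j : ℝ) * a j (l - j) * f j * f (l - j)) hiN
  have hF := sum_range_succ_sum_Icc_succ_sub_sum_range_sum_Icc
    (fun j l => (j : ℝ) * b j (l - j) * f l) hiN
  have hgainC := two_mul_sum_range_natCast_mul_of_symm (fun p q => a p q * f p * f q)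
    (fun p q => by rw [ha]; ring) i
  have hgainF := two_mul_sum_range_natCast_mul_of_symm (fun p q => b p q * f i)
    (fun p q => by rw [hb]) i
  rw [hC, hF, Nat.sum_Icc_eq_add_sum_Icc_succ _ hiN]
  simp only [sum_range_succ, Nat.sub_self, sum_sub_distrib, mul_assoc, ← mul_sum]
    at hgainC hgainF ⊢
  linear_combination hgainC / 2 - hgainF / 2

theorem flux_difference_eq (N : ℕ) (a b : ℕ → ℕ → ℝ) (f : ℕ → ℝ)
    (ha : ∀ i j, a i j = a j i) (hb : ∀ i j, b i j = b j i)
    (i : ℕ) (hi1 : 1 ≤ i) (hiN : i ≤ N - 1) :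
    -((∑ j ∈ range (i + 1), ∑ l ∈ Icc (i + 1) (N - 1),
          (j : ℝ) * a j (l - j) * f j * f (l - j))
      - ∑ j ∈ range i, ∑ l ∈ Icc i (N - 1),
          (j : ℝ) * a j (l - j) * f j * f (l - j))
    + ((∑ j ∈ range (i + 1), ∑ l ∈ Icc (i + 1) (N - 1),
          (j : ℝ) * b j (l - j) * f l)
      - ∑ j ∈ range i, ∑ l ∈ Icc i (N - 1),
          (j : ℝ) * b j (l - j) * f l)
    = (i : ℝ) *
      ((1 / 2) * ∑ l ∈ range (i + 1),
          (a l (i - l) * f l * f (i - l) - b l (i - l) * f i)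
        - ∑ l ∈ Icc i (N - 1),
          (a i (l - i) * f i * f (l - i) - b i (l - i) * f l)) :=
  flux_difference_eq_general N a b f ha hb i hiN
end

section
/- Mass bound from relative entropy: if f_i, M_i > 0 and w_i > 0 are finite families, then (1/2)·∑_i w_i·f_i ≤ (e² + 1/e)·∑_i w_i·M_i + (1/2)·H(f|M), where H(f|M) = ∑_i w_i·( f_i·(ln(f_i/M_i) − 1) + M_i ). -/
/-!
The entropy density `φ(f) = f (log (f / M) - 1) + M` is convex in `f` with Legendre transform
`t ↦ M (exp t - 1)`, so Young's inequality gives `t f - M (exp t - 1) ≤ φ(f)` for every `t`.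
Taking `t = 1` and summing with the weights bounds `∑ w f` by `(e - 1) ∑ w M + H(f|M)`, and
`(e - 1) / 2 ≤ e² + 1 / e`.
-/

open Finset Real

noncomputable def entropyDensity (f M : ℝ) : ℝ := f * (log (f / M) - 1) + M

theorem mul_sub_mul_exp_sub_one_le_entropyDensity (t : ℝ) {f M : ℝ} (hf : 0 ≤ f) (hM : 0 < M) :
    t * f - M * (exp t - 1) ≤ entropyDensity f M := by
  rcases hf.eq_or_lt with rfl | hf
  · simp only [entropyDensity, mul_zero, zero_mul, zero_sub, zero_add]
    nlinarith [exp_pos t]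
  -- `x + 1 ≤ exp x` at `x = t - log (f / M)`, multiplied by `f`
  have key : t - log (f / M) + 1 ≤ exp t * M / f := by
    have := add_one_le_exp (t - log (f / M))
    rwa [exp_sub, exp_log (by positivity), div_div_eq_mul_div] at this
  have := mul_le_mul_of_nonneg_left key hf.le
  rw [mul_div_cancel₀ _ hf.ne'] at this
  unfold entropyDensity
  linarith

theorem mul_sum_sub_le_sum_entropyDensity (t : ℝ) (s : Finset ℕ) {w f M : ℕ → ℝ}
    (hw : ∀ i ∈ s, 0 ≤ w i) (hf : ∀ i ∈ s, 0 ≤ f i) (hM : ∀ i ∈ s, 0 < M i) :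
    t * ∑ i ∈ s, w i * f i - (exp t - 1) * ∑ i ∈ s, w i * M i
      ≤ ∑ i ∈ s, w i * entropyDensity (f i) (M i) := by
  rw [mul_sum, mul_sum, ← sum_sub_distrib]
  refine sum_le_sum fun i hi => ?_
  have := mul_le_mul_of_nonneg_left
    (mul_sub_mul_exp_sub_one_le_entropyDensity t (hf i hi) (hM i hi)) (hw i hi)
  linarith

theorem exp_one_sub_one_div_two_le : (exp 1 - 1) / 2 ≤ exp 1 ^ 2 + 1 / exp 1 := by
  have he : 1 ≤ exp 1 := one_le_exp zero_le_one
  have : 0 < 1 / exp 1 := by positivity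
  nlinarith

theorem mass_bound_from_entropy (s : Finset ℕ) (w f M : ℕ → ℝ)
    (hw : ∀ i ∈ s, 0 < w i) (hf : ∀ i ∈ s, 0 < f i) (hM : ∀ i ∈ s, 0 < M i) :
    (1 / 2) * ∑ i ∈ s, w i * f i
      ≤ (Real.exp 1 ^ 2 + 1 / Real.exp 1) * ∑ i ∈ s, w i * M i
        + (1 / 2) * ∑ i ∈ s, w i * (f i * (Real.log (f i / M i) - 1) + M i) := by
  have young := mul_sum_sub_le_sum_entropyDensity 1 s
    (fun i hi => (hw i hi).le) (fun i hi => (hf i hi).le) hM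
  have hmass : 0 ≤ ∑ i ∈ s, w i * M i :=
    sum_nonneg fun i hi => (mul_pos (hw i hi) (hM i hi)).le
  have := mul_le_mul_of_nonneg_right exp_one_sub_one_div_two_le hmass
  simp only [entropyDensity] at young
  linarith
end
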